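/- arXiv:2507.05459 — 3 statements merged into one kernel-verified Lean document; each statement's English description precedes it below -/
import Mathlib

section
/- If A : V → W is a linear map between n-dimensional real inner product spaces with operator norm ‖A‖ ≤ L and |det A| = 1, then A is invertible and the operator norm of A⁻¹ is at most L^{n-1}. -/
/-!
STATEMENT 1: If `A : V → W` is a linear map between `n`-dimensional real inner
product spaces with operator norm `‖A‖ ≤ L` (`L ≥ 1`, `n ≥ 1`) and the product
of its singular values (the `μ i`, square roots of the eigenvalues of `A*A`)
equals `1`, then `A` is invertible and `‖A⁻¹‖ ≤ L^(n-1)`.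
-/
theorem stmt1
    {V W : Type*} [NormedAddCommGroup V] [InnerProductSpace ℝ V]
    [NormedAddCommGroup W] [InnerProductSpace ℝ W]
    [FiniteDimensional ℝ V] [FiniteDimensional ℝ W]
    (n : ℕ) (hn : 1 ≤ n) (hV : Module.finrank ℝ V = n) (hW : Module.finrank ℝ W = n)
    (A : V →L[ℝ] W) (L : ℝ) (hL : 1 ≤ L) (hA : ‖A‖ ≤ L)
    (μ : Fin n → ℝ) (hμ0 : ∀ i, 0 ≤ μ i)
    (v : OrthonormalBasis (Fin n) ℝ V)
    (hsv : ∀ i, (ContinuousLinearMap.adjoint A) (A (v i)) = (μ i ^ 2) • v i)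
    (hdet : ∏ i, μ i = 1) :
    ∃ B : W →L[ℝ] V, (∀ w, A (B w) = w) ∧ (∀ x, B (A x) = x) ∧ ‖B‖ ≤ L ^ (n - 1) := by
  set M : ℝ := L ^ (n - 1) with hM
  have hM1 : 1 ≤ M := one_le_pow₀ hL
  have hM0 : 0 < M := lt_of_lt_of_le one_pos hM1
  have hL0 : 0 ≤ L := le_trans zero_le_one hL
  -- each singular value is at most L
  have hμL : ∀ i, μ i ≤ L := by
    intro i
    have h1 : μ i ^ 2 = ‖A (v i)‖ ^ 2 := by
      have h := (ContinuousLinearMap.adjoint_inner_right A (v i) (A (v i))).symm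
      rw [hsv i, real_inner_smul_right, real_inner_self_eq_norm_sq,
        real_inner_self_eq_norm_sq, v.orthonormal.1 i, one_pow, mul_one] at h
      exact h.symm
    have h2 : ‖A (v i)‖ ≤ L := by
      calc ‖A (v i)‖ ≤ ‖A‖ * ‖v i‖ := A.le_opNorm _
        _ = ‖A‖ := by rw [v.orthonormal.1 i, mul_one]
        _ ≤ L := hA
    nlinarith [hμ0 i, norm_nonneg (A (v i)), pow_le_pow_left₀ (norm_nonneg (A (v i))) h2 2]
  -- each singular value is at least M⁻¹
  have hμlow : ∀ i, 1 ≤ μ i * M := by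
    intro i
    have hsplit : μ i * ∏ j ∈ {i}ᶜ, μ j = 1 := by
      rw [← hdet, ← Finset.prod_compl_mul_prod {i} μ, Finset.prod_singleton]; ring
    have hcard : ({i}ᶜ : Finset (Fin n)).card = n - 1 := by
      rw [Finset.card_compl, Finset.card_singleton, Fintype.card_fin]
    have hprod : ∏ j ∈ {i}ᶜ, μ j ≤ M := by
      calc ∏ j ∈ {i}ᶜ, μ j ≤ ∏ _j ∈ ({i}ᶜ : Finset (Fin n)), L :=
            Finset.prod_le_prod (fun j _ => hμ0 j) (fun j _ => hμL j)
        _ = M := by rw [Finset.prod_const, hcard]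
    nlinarith [hμ0 i, Finset.prod_nonneg (fun j (_ : j ∈ ({i}ᶜ : Finset (Fin n))) => hμ0 j)]
  -- key inequality : ‖x‖ ≤ M * ‖A x‖
  have hkey : ∀ x : V, ‖x‖ ≤ M * ‖A x‖ := by
    intro x
    have hxsum : ∑ i, v.repr x i • v i = x := v.sum_repr x
    have hAAx : (ContinuousLinearMap.adjoint A) (A x)
        = ∑ i, v.repr x i • (μ i ^ 2) • v i := by
      conv_lhs => rw [← hxsum]
      rw [map_sum, map_sum]
      exact Finset.sum_congr rfl fun i _ => by rw [map_smul, map_smul, hsv i]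
    have hnx : ‖x‖ ^ 2 = ∑ i, (v.repr x i) ^ 2 := by
      rw [← real_inner_self_eq_norm_sq]
      nth_rewrite 1 [← hxsum]
      rw [sum_inner]
      exact Finset.sum_congr rfl fun i _ => by
        rw [real_inner_smul_left, ← v.repr_apply_apply, sq]
    have hnAx : ‖A x‖ ^ 2 = ∑ i, μ i ^ 2 * (v.repr x i) ^ 2 := by
      rw [← real_inner_self_eq_norm_sq, ← ContinuousLinearMap.adjoint_inner_right A x (A x),
        hAAx, inner_sum]
      refine Finset.sum_congr rfl fun i _ => ?_
      rw [real_inner_smul_right, real_inner_smul_right, real_inner_comm,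
        ← v.repr_apply_apply]
      ring
    have hsq : ‖x‖ ^ 2 ≤ (M * ‖A x‖) ^ 2 := by
      have h1 : ‖x‖ ^ 2 ≤ M ^ 2 * ‖A x‖ ^ 2 := by
        rw [hnx, hnAx, Finset.mul_sum]
        refine Finset.sum_le_sum fun i _ => ?_
        have h2 : 1 ≤ (μ i * M) ^ 2 := one_le_pow₀ (hμlow i)
        nlinarith [sq_nonneg (v.repr x i)]
      calc ‖x‖ ^ 2 ≤ M ^ 2 * ‖A x‖ ^ 2 := h1
        _ = (M * ‖A x‖) ^ 2 := by ring
    exact le_of_pow_le_pow_left₀ two_ne_zero (by positivity) hsq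
  -- injectivity
  have hinj : Function.Injective A := by
    intro x y hxy
    have : ‖x - y‖ ≤ M * ‖A (x - y)‖ := hkey _
    rw [map_sub, hxy, sub_self, norm_zero, mul_zero] at this
    exact sub_eq_zero.mp (norm_le_zero_iff.mp this)
  have hinjL : Function.Injective (A : V →ₗ[ℝ] W) := hinj
  have hsurj : Function.Surjective (A : V →ₗ[ℝ] W) :=
    (LinearMap.injective_iff_surjective_of_finrank_eq_finrank (hV.trans hW.symm)).mp hinjL
  let e : V ≃ₗ[ℝ] W := LinearEquiv.ofBijective (A : V →ₗ[ℝ] W) ⟨hinjL, hsurj⟩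
  let E : V ≃L[ℝ] W := e.toContinuousLinearEquiv
  refine ⟨E.symm.toContinuousLinearMap, ?_, ?_, ?_⟩
  · intro w
    have : A (E.symm w) = E (E.symm w) := rfl
    rw [ContinuousLinearEquiv.coe_coe, this, E.apply_symm_apply]
  · intro x
    have : A x = E x := rfl
    rw [ContinuousLinearEquiv.coe_coe, this, E.symm_apply_apply]
  · refine ContinuousLinearMap.opNorm_le_bound _ (le_of_lt hM0) fun w => ?_
    have hAE : A (E.symm w) = w := by
      have : A (E.symm w) = E (E.symm w) := rfl
      rw [this, E.apply_symm_apply]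
    calc ‖E.symm.toContinuousLinearMap w‖ ≤ M * ‖A (E.symm w)‖ := hkey _
      _ = M * ‖w‖ := by rw [hAE]
end

section
/- Let ℓ : [0,1] → ℝⁿ be the affine segment ℓ(t) = (1-t)v₁ + t v₂ between two points v₁, v₂ ∈ ℝⁿ, and let c : [0,1] → ℝⁿ be any continuous curve with c(0) = v₁ and c(1) = v₂. Then for every r > 0, the Lebesgue measure of the open r-neighborhood of the image of ℓ is at most the Lebesgue measure of the open r-neighborhood of the image of c. -/
open MeasureTheory Set Metric AffineMap
open scoped RealInnerProductSpace

/-!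
Cut space into thin slabs perpendicular to `v₂ - v₁`. Every hyperplane perpendicular to the
segment between its endpoints meets the connected curve `c` (intermediate value theorem), so each
slab of the `ρ`-neighbourhood of the segment can be translated perpendicularly to `v₂ - v₁` until
its piece of the segment sits on a point of `c`. The translated slabs stay pairwise disjoint, keep
their volume, and lie in the `r`-neighbourhood of `c` once the slabs are thinner than `r - ρ`
(up to the factor `‖v₂ - v₁‖`). Letting `ρ ↑ r` gives the claim.
-/

theorem Set.abs_projIcc_sub_self_le {a b : ℝ} (hab : a ≤ b) {t : ℝ} (ht : t ∈ Icc a b) (c : ℝ) :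
    |(projIcc a b hab c : ℝ) - c| ≤ |t - c| := by
  rcases le_total c a with hca | hac
  · rw [projIcc_of_le_left hab hca, abs_of_nonneg (by simpa), abs_of_nonneg (by linarith [ht.1])]
    simpa using ht.1
  rcases le_total b c with hbc | hcb
  · rw [projIcc_of_right_le hab hbc, abs_of_nonpos (by simpa),
      abs_of_nonpos (by linarith [ht.2])]
    simp only [neg_sub, sub_le_sub_iff_left]
    exact ht.2
  · rw [projIcc_of_mem hab ⟨hac, hcb⟩, sub_self, abs_zero]
    exact abs_nonneg _

theorem Metric.measure_thickening_le_of_forall_lt {X : Type*} [PseudoMetricSpace X]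
    [MeasurableSpace X] (μ : Measure X) {s : Set X} {r : ℝ} {m : ENNReal}
    (h : ∀ ρ < r, μ (thickening ρ s) ≤ m) : μ (thickening r s) ≤ m := by
  have hlt : ∀ k : ℕ, r - 1 / (k + 1) < r := fun _ => sub_lt_self r Nat.one_div_pos_of_nat
  have hmono : Monotone fun k : ℕ => thickening (r - 1 / (k + 1)) s := fun k l hkl =>
    thickening_mono (by gcongr) s
  have hunion : thickening r s = ⋃ k : ℕ, thickening (r - 1 / (k + 1)) s := by
    refine Subset.antisymm (fun x hx => ?_) (iUnion_subset fun k => thickening_mono (hlt k).le s)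
    obtain ⟨z, hz, hxz⟩ := mem_thickening_iff.1 hx
    obtain ⟨k, hk⟩ := exists_nat_one_div_lt (sub_pos.2 hxz)
    exact mem_iUnion.2 ⟨k, mem_thickening_iff.2 ⟨z, hz, by linarith⟩⟩
  rw [hunion, hmono.measure_iUnion]
  exact iSup_le fun k => h _ (hlt k)

theorem MeasureTheory.measure_le_of_fiberwise_add_mem {G ι : Type*} [AddGroup G]
    [MeasurableSpace G] [MeasurableAdd G] (μ : Measure G) [μ.IsAddRightInvariant]
    [Countable ι] [MeasurableSpace ι] [MeasurableSingletonClass ι] {f : G → ι}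
    (hf : Measurable f) (w : ι → G) (hfw : ∀ i x, f (x + w i) = f x) {A B : Set G}
    (hA : MeasurableSet A) (hAB : ∀ x ∈ A, x + w (f x) ∈ B) : μ A ≤ μ B := by
  set P : ι → Set G := fun i => A ∩ f ⁻¹' {i}
  set T : ι → Set G := fun i => (· + -w i) ⁻¹' P i
  have hPm : ∀ i, MeasurableSet (P i) := fun i => hA.inter (hf (measurableSet_singleton i))
  have hfw' : ∀ i y, f (y + -w i) = f y := fun i y => by
    simpa using (hfw i (y + -w i)).symm
  have hT : ∀ i y, y ∈ T i → f y = i ∧ y + -w i ∈ A := fun i y ⟨hyA, hyf⟩ =>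
    ⟨(hfw' i y).symm.trans hyf, hyA⟩
  calc μ A = μ (⋃ i, P i) := by congr 1; ext x; simp [P]
    _ = ∑' i, μ (P i) := measure_iUnion (fun i j hij => disjoint_left.2 fun x hi hj =>
        hij (hi.2.symm.trans hj.2)) hPm
    _ = ∑' i, μ (T i) := by simp only [T, measure_preimage_add_right]
    _ = μ (⋃ i, T i) := (measure_iUnion (fun i j hij => disjoint_left.2 fun y hi hj =>
        hij ((hT i y hi).1.symm.trans (hT j y hj).1))
        fun i => (hPm i).preimage (measurable_add_const _)).symm
    _ ≤ μ B := measure_mono <| iUnion_subset fun i y hy => by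
        obtain ⟨hfy, hyA⟩ := hT i y hy
        have := hAB _ hyA
        rwa [hfw', hfy, neg_add_cancel_right] at this

section Segment

variable {E : Type*} [NormedAddCommGroup E] [InnerProductSpace ℝ E]

/-- The coordinate `t` of the orthogonal projection `lineMap v₁ v₂ t` of `x` onto the line through
`v₁` and `v₂`; it is the junk value `0` when `v₁ = v₂`. -/
noncomputable def lineParam (v₁ v₂ x : E) : ℝ := ⟪x - v₁, v₂ - v₁⟫ / ‖v₂ - v₁‖ ^ 2

theorem inner_sub_eq_lineParam_mul (v₁ v₂ x : E) :
    ⟪x - v₁, v₂ - v₁⟫ = lineParam v₁ v₂ x * ‖v₂ - v₁‖ ^ 2 := by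
  rcases eq_or_ne (v₂ - v₁) 0 with h | h
  · simp [h]
  · rw [lineParam, div_mul_cancel₀ _ (by positivity)]

theorem lineParam_add_of_inner_eq_zero {v₁ v₂ w : E} (hw : ⟪w, v₂ - v₁⟫ = 0) (x : E) :
    lineParam v₁ v₂ (x + w) = lineParam v₁ v₂ x := by
  rw [lineParam, lineParam, add_sub_right_comm, inner_add_left, hw, add_zero]

theorem norm_sub_lineMap_sq (v₁ v₂ x : E) (t : ℝ) :
    ‖x - lineMap v₁ v₂ t‖ ^ 2 =
      ‖x - v₁‖ ^ 2 + ‖v₂ - v₁‖ ^ 2 * ((t - lineParam v₁ v₂ x) ^ 2 - lineParam v₁ v₂ x ^ 2) := by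
  have : x - lineMap v₁ v₂ t = (x - v₁) - t • (v₂ - v₁) := by
    rw [lineMap_apply_module']; abel
  rw [this, norm_sub_sq_real, real_inner_smul_right, inner_sub_eq_lineParam_mul, norm_smul,
    mul_pow, Real.norm_eq_abs, sq_abs]
  ring

theorem dist_lineMap_projIcc_lineParam_le (v₁ v₂ x : E) {t : ℝ} (ht : t ∈ Icc (0 : ℝ) 1) :
    dist x (lineMap v₁ v₂ (projIcc 0 1 zero_le_one (lineParam v₁ v₂ x) : ℝ)) ≤
      dist x (lineMap v₁ v₂ t) := by
  rw [dist_eq_norm, dist_eq_norm, ← sq_le_sq₀ (norm_nonneg _) (norm_nonneg _),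
    norm_sub_lineMap_sq, norm_sub_lineMap_sq]
  gcongr _ + _ * (?_ - _)
  exact sq_le_sq.2 (Set.abs_projIcc_sub_self_le zero_le_one ht _)

theorem IsPreconnected.exists_inner_sub_eq {S : Set E} (hS : IsPreconnected S) {v₁ v₂ : E}
    (h₁ : v₁ ∈ S) (h₂ : v₂ ∈ S) {s : ℝ} (hs : s ∈ Icc (0 : ℝ) 1) :
    ∃ p ∈ S, ⟪p - v₁, v₂ - v₁⟫ = s * ‖v₂ - v₁‖ ^ 2 := by
  have hivt := hS.intermediate_value (f := fun p => ⟪p - v₁, v₂ - v₁⟫) h₁ h₂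
    ((continuous_id.sub continuous_const).inner continuous_const).continuousOn
  simp only [sub_self, inner_zero_left, real_inner_self_eq_norm_sq] at hivt
  exact hivt ⟨mul_nonneg hs.1 (sq_nonneg _), mul_le_of_le_one_left (sq_nonneg _) hs.2⟩

variable [MeasurableSpace E] [BorelSpace E] (μ : Measure E) [μ.IsAddRightInvariant]

theorem measure_thickening_segment_le_of_lt {v₁ v₂ : E} {S : Set E}
    (hS : ∀ s ∈ Icc (0 : ℝ) 1, ∃ p ∈ S, ⟪p - v₁, v₂ - v₁⟫ = s * ‖v₂ - v₁‖ ^ 2) {ρ r : ℝ}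
    (hρr : ρ < r) : μ (thickening ρ (segment ℝ v₁ v₂)) ≤ μ (thickening r S) := by
  obtain ⟨h, hh, hhr⟩ := exists_pos_mul_lt (sub_pos.2 hρr) ‖v₂ - v₁‖
  choose p hpS hp using hS
  set τ : E → ℝ := lineParam v₁ v₂
  have hτ : Continuous τ := by unfold τ lineParam; fun_prop
  set clamp : ℝ → Icc (0 : ℝ) 1 := projIcc 0 1 zero_le_one
  set s : ℤ → ℝ := fun k => clamp (k * h)
  set q : ℤ → E := fun k => p _ (clamp (k * h)).2
  set w : ℤ → E := fun k => q k - lineMap v₁ v₂ (s k)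
  have hw : ∀ k, ⟪w k, v₂ - v₁⟫ = 0 := fun k => by
    simp only [w]
    rw [lineMap_apply_module', sub_add_eq_sub_sub_swap, inner_sub_left, hp, real_inner_smul_left,
      real_inner_self_eq_norm_sq, sub_self]
  -- Slab `k` is the fibre `⌊τ x / h⌋ = k`; the shift `w k` moves its point `lineMap v₁ v₂ (s k)`
  -- of the segment onto `q k ∈ S`.
  refine measure_le_of_fiberwise_add_mem μ (f := fun x => ⌊τ x / h⌋)
    (hτ.div_const h).measurable.floor w
    (fun k x => by simp only [τ, lineParam_add_of_inner_eq_zero (hw k)])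
    isOpen_thickening.measurableSet fun x hx => mem_thickening_iff.2 ⟨q ⌊τ x / h⌋, hpS _ _, ?_⟩
  set k := ⌊τ x / h⌋
  obtain ⟨_, ⟨t, ht, rfl⟩, hxt⟩ := mem_thickening_iff.1 (segment_eq_image_lineMap ℝ v₁ v₂ ▸ hx)
  have hfloor : dist (clamp (τ x) : ℝ) (s k) ≤ h := by
    rw [Real.dist_eq]
    refine (abs_projIcc_sub_projIcc _).trans ?_
    rw [abs_of_nonneg (Int.sub_floor_div_mul_nonneg _ hh)]
    exact (Int.sub_floor_div_mul_lt _ hh).le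
  calc dist (x + w k) (q k) = dist x (lineMap v₁ v₂ (s k)) := by
        simp only [w, dist_eq_norm]; congr 1; abel
    _ ≤ dist x (lineMap v₁ v₂ (clamp (τ x) : ℝ)) +
        dist (lineMap v₁ v₂ (clamp (τ x) : ℝ)) (lineMap v₁ v₂ (s k)) := dist_triangle _ _ _
    _ < ρ + ‖v₂ - v₁‖ * h := by
        refine add_lt_add_of_lt_of_le
          ((dist_lineMap_projIcc_lineParam_le v₁ v₂ x ht).trans_lt hxt) ?_
        rw [dist_lineMap_lineMap, dist_comm v₁, dist_eq_norm v₂, mul_comm]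
        exact mul_le_mul_of_nonneg_left hfloor (norm_nonneg _)
    _ < r := by linarith

theorem measure_thickening_segment_le {v₁ v₂ : E} {S : Set E}
    (hS : ∀ s ∈ Icc (0 : ℝ) 1, ∃ p ∈ S, ⟪p - v₁, v₂ - v₁⟫ = s * ‖v₂ - v₁‖ ^ 2) (r : ℝ) :
    μ (thickening r (segment ℝ v₁ v₂)) ≤ μ (thickening r S) :=
  measure_thickening_le_of_forall_lt μ fun _ hρ => measure_thickening_segment_le_of_lt μ hS hρ

end Segment

theorem stmt3_general (n : ℕ) (v₁ v₂ : EuclideanSpace ℝ (Fin n))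
    (c : ℝ → EuclideanSpace ℝ (Fin n)) (hc : ContinuousOn c (Icc 0 1))
    (hc0 : c 0 = v₁) (hc1 : c 1 = v₂) (r : ℝ) :
    volume (Metric.thickening r ((fun t : ℝ => (1 - t) • v₁ + t • v₂) '' Icc 0 1))
      ≤ volume (Metric.thickening r (c '' Icc 0 1)) := by
  have hS : IsPreconnected (c '' Icc 0 1) := isPreconnected_Icc.image c hc
  rw [← segment_eq_image]
  exact measure_thickening_segment_le volume
    (fun _ => hS.exists_inner_sub_eq ⟨0, by simp, hc0⟩ ⟨1, by simp, hc1⟩) r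

theorem stmt3 (n : ℕ) (v₁ v₂ : EuclideanSpace ℝ (Fin n))
    (c : ℝ → EuclideanSpace ℝ (Fin n)) (hc : ContinuousOn c (Icc 0 1))
    (hc0 : c 0 = v₁) (hc1 : c 1 = v₂) (r : ℝ) (hr : 0 < r) :
    volume (Metric.thickening r ((fun t : ℝ => (1 - t) • v₁ + t • v₂) '' Icc 0 1))
      ≤ volume (Metric.thickening r (c '' Icc 0 1)) :=
  stmt3_general n v₁ v₂ c hc hc0 hc1 r
end

section
/- For v₁, v₂ ∈ ℝⁿ and r > 0, the Lebesgue volume of the open r-neighborhood of the segment [v₁, v₂] equals ωₙ rⁿ + |v₂ - v₁| · ω_{n-1} r^{n-1}, where ω_k is the volume of the k-dimensional Euclidean unit ball. -/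
/-!
After an affine isometry, the segment becomes `[0, L] × {0}` in `ℝ × V` with the `L²` norm,
where `V` has dimension `n - 1`. Over `y ∈ V` with `‖y‖ < r`, the slice of its `r`-neighbourhood
is the interval `(-√(r² - ‖y‖²), L + √(r² - ‖y‖²))`, so by Cavalieri's principle the volume of the
neighbourhood exceeds that of the `r`-ball (the case `L = 0`) by exactly `L · vol (ball (0 : V) r)`.
-/

open MeasureTheory

noncomputable def unitBallVolume (k : ℕ) : ENNReal :=
  volume (Metric.ball (0 : EuclideanSpace ℝ (Fin k)) 1)

open Metric Set WithLp

theorem IsometryEquiv.preimage_thickening {α β : Type*} [PseudoEMetricSpace α]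
    [PseudoEMetricSpace β] (Φ : α ≃ᵢ β) (δ : ℝ) (t : Set β) :
    Φ ⁻¹' thickening δ t = thickening δ (Φ ⁻¹' t) := by
  ext x
  rw [mem_preimage, mem_thickening_iff_infEDist_lt, mem_thickening_iff_infEDist_lt,
    ← infEDist_image Φ.isometry, image_preimage_eq t Φ.surjective]

section Congr

variable {E F : Type*} [NormedAddCommGroup E] [InnerProductSpace ℝ E] [FiniteDimensional ℝ E]
  [MeasurableSpace E] [BorelSpace E] [NormedAddCommGroup F] [InnerProductSpace ℝ F]
  [FiniteDimensional ℝ F] [MeasurableSpace F] [BorelSpace F]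

theorem AffineIsometryEquiv.measurePreserving (g : E ≃ᵃⁱ[ℝ] F) : MeasurePreserving g := by
  have hg : ⇑g = (· + g 0) ∘ g.linearIsometryEquiv := by
    ext x
    simpa using g.map_vadd 0 x
  rw [hg]
  exact (measurePreserving_add_right _ _).comp g.linearIsometryEquiv.measurePreserving

theorem volume_thickening_segment_congr (f : E ≃ₗᵢ[ℝ] F) {v₁ v₂ : E} {w₁ w₂ : F}
    (h : dist v₁ v₂ = dist w₁ w₂) (r : ℝ) :
    volume (thickening r (segment ℝ v₁ v₂)) = volume (thickening r (segment ℝ w₁ w₂)) := by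
  have hnorm : ‖f (v₂ - v₁)‖ = ‖w₂ - w₁‖ := by
    rw [f.norm_map, ← dist_eq_norm, ← dist_eq_norm, dist_comm, h, dist_comm]
  set R := Submodule.reflection (ℝ ∙ (f (v₂ - v₁) - (w₂ - w₁)))ᗮ
  have hR : R (f (v₂ - v₁)) = w₂ - w₁ := Submodule.reflection_sub hnorm
  let g : E ≃ᵃⁱ[ℝ] F := ((AffineIsometryEquiv.vaddConst ℝ v₁).symm.trans
    (f.trans R).toAffineIsometryEquiv).trans (AffineIsometryEquiv.vaddConst ℝ w₁)
  have hg : ∀ x, g x = R (f (x - v₁)) + w₁ := fun x => rfl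
  have hseg : g ⁻¹' segment ℝ w₁ w₂ = segment ℝ v₁ v₂ := by
    have h₁ : g v₁ = w₁ := by simp [hg]
    have h₂ : g v₂ = w₂ := by rw [hg, hR, sub_add_cancel]
    have himage := image_segment ℝ g.toAffineEquiv.toAffineMap v₁ v₂
    rw [AffineEquiv.coe_toAffineMap, AffineIsometryEquiv.coe_toAffineEquiv, h₁, h₂] at himage
    rw [← himage, preimage_image_eq _ g.injective]
  have hthick := g.toIsometryEquiv.preimage_thickening r (segment ℝ w₁ w₂)
  rw [AffineIsometryEquiv.coe_toIsometryEquiv, hseg] at hthick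
  rw [← hthick]
  exact g.measurePreserving.measure_preimage isOpen_thickening.measurableSet.nullMeasurableSet

end Congr

theorem setOf_exists_mem_Icc_sq_sub_lt {L c : ℝ} (hL : 0 ≤ L) (hc : 0 < c) :
    {t : ℝ | ∃ s ∈ Icc 0 L, (t - s) ^ 2 < c} = Ioo (-√c) (L + √c) := by
  ext t
  simp only [mem_ofPred_eq, mem_Ioo, Real.sq_lt]
  constructor
  · rintro ⟨s, ⟨hs₀, hsL⟩, hlo, hhi⟩
    constructor <;> linarith
  · rintro ⟨hlo, hhi⟩
    have hsc : 0 < √c := Real.sqrt_pos.2 hc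
    rcases le_total t 0 with ht | ht
    · exact ⟨0, ⟨le_rfl, hL⟩, by linarith, by linarith⟩
    rcases le_total t L with htL | htL
    · exact ⟨t, ⟨ht, htL⟩, by linarith, by linarith⟩
    · exact ⟨L, ⟨hL, le_rfl⟩, by linarith, by linarith⟩

section Prod

variable {V : Type*} [NormedAddCommGroup V] [InnerProductSpace ℝ V]

theorem segment_zero_toLp_prod {L : ℝ} (hL : 0 ≤ L) :
    segment ℝ (0 : WithLp 2 (ℝ × V)) (toLp 2 (L, 0)) = (fun s : ℝ => toLp 2 (s, 0)) '' Icc 0 L := by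
  let ℓ : ℝ →ᵃ[ℝ] WithLp 2 (ℝ × V) :=
    ((WithLp.linearEquiv 2 ℝ (ℝ × V)).symm.toLinearMap ∘ₗ LinearMap.inl ℝ ℝ V).toAffineMap
  rw [← segment_eq_Icc hL]
  exact (image_segment ℝ ℓ 0 L).symm

theorem toLp_mem_thickening_segment {L r : ℝ} (hL : 0 ≤ L) (hr : 0 < r) (t : ℝ) (y : V) :
    toLp 2 (t, y) ∈ thickening r (segment ℝ (0 : WithLp 2 (ℝ × V)) (toLp 2 (L, 0))) ↔
      ∃ s ∈ Icc 0 L, (t - s) ^ 2 < r ^ 2 - ‖y‖ ^ 2 := by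
  have hdist (s : ℝ) : dist (toLp 2 (t, y)) (toLp 2 (s, (0 : V))) ^ 2 = (t - s) ^ 2 + ‖y‖ ^ 2 := by
    rw [dist_eq_norm, ← toLp_sub, prod_norm_sq_eq_of_L2]
    simp
  simp only [segment_zero_toLp_prod hL, mem_thickening_iff, exists_mem_image]
  refine exists_congr fun s => and_congr_right fun _ => ?_
  rw [← sq_lt_sq₀ dist_nonneg hr.le, hdist, lt_sub_iff_add_lt]

theorem volume_slice_thickening_segment {L r : ℝ} (hL : 0 ≤ L) (hr : 0 < r) (y : V) :
    volume ((fun t : ℝ => toLp 2 (t, y)) ⁻¹'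
        thickening r (segment ℝ (0 : WithLp 2 (ℝ × V)) (toLp 2 (L, 0)))) =
      (ball 0 r).indicator (fun y => ENNReal.ofReal (2 * √(r ^ 2 - ‖y‖ ^ 2))) y +
        (ball 0 r).indicator (fun _ => ENNReal.ofReal L) y := by
  have hslice : (fun t : ℝ => toLp 2 (t, y)) ⁻¹'
      thickening r (segment ℝ (0 : WithLp 2 (ℝ × V)) (toLp 2 (L, 0))) =
        {t | ∃ s ∈ Icc 0 L, (t - s) ^ 2 < r ^ 2 - ‖y‖ ^ 2} :=
    ext fun t => toLp_mem_thickening_segment hL hr t y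
  rw [hslice]
  by_cases hy : y ∈ ball 0 r
  · have hc : 0 < r ^ 2 - ‖y‖ ^ 2 := by
      rw [mem_ball_zero_iff] at hy
      nlinarith [norm_nonneg y]
    rw [setOf_exists_mem_Icc_sq_sub_lt hL hc, Real.volume_Ioo, indicator_of_mem hy,
      indicator_of_mem hy, ← ENNReal.ofReal_add (by positivity) hL]
    ring_nf
  · have hc : r ^ 2 - ‖y‖ ^ 2 ≤ 0 := by
      rw [mem_ball_zero_iff, not_lt] at hy
      nlinarith
    have hempty : {t : ℝ | ∃ s ∈ Icc 0 L, (t - s) ^ 2 < r ^ 2 - ‖y‖ ^ 2} = ∅ :=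
      eq_empty_of_forall_notMem fun t ⟨s, _, hs⟩ => by nlinarith [sq_nonneg (t - s)]
    rw [hempty, indicator_of_notMem hy, indicator_of_notMem hy, measure_empty, add_zero]

variable [FiniteDimensional ℝ V] [MeasurableSpace V] [BorelSpace V]

theorem volume_thickening_segment_toLp_prod {L r : ℝ} (hL : 0 ≤ L) (hr : 0 < r) :
    volume (thickening r (segment ℝ (0 : WithLp 2 (ℝ × V)) (toLp 2 (L, 0)))) =
      (∫⁻ y in ball (0 : V) r, ENNReal.ofReal (2 * √(r ^ 2 - ‖y‖ ^ 2))) +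
        ENNReal.ofReal L * volume (ball (0 : V) r) := by
  have hopen : IsOpen (thickening r (segment ℝ (0 : WithLp 2 (ℝ × V)) (toLp 2 (L, 0)))) :=
    isOpen_thickening
  rw [← (WithLp.volume_preserving_toLp ℝ V).measure_preimage hopen.measurableSet.nullMeasurableSet,
    Measure.volume_eq_prod, Measure.prod_apply_symm
      (hopen.preimage (WithLp.prod_continuous_toLp 2 ℝ V)).measurableSet]
  simp_rw [preimage_preimage, volume_slice_thickening_segment hL hr]
  rw [lintegral_add_right _ (measurable_const.indicator measurableSet_ball),
    lintegral_indicator measurableSet_ball, lintegral_indicator_const measurableSet_ball]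

end Prod

theorem volume_thickening_segment {E V : Type*} [NormedAddCommGroup E] [InnerProductSpace ℝ E]
    [FiniteDimensional ℝ E] [MeasurableSpace E] [BorelSpace E] [NormedAddCommGroup V]
    [InnerProductSpace ℝ V] [FiniteDimensional ℝ V] [MeasurableSpace V] [BorelSpace V]
    (hEV : Module.finrank ℝ E = Module.finrank ℝ V + 1) (v₁ v₂ : E) {r : ℝ} (hr : 0 < r) :
    volume (thickening r (segment ℝ v₁ v₂)) =
      volume (ball (0 : E) r) + ENNReal.ofReal (dist v₁ v₂) * volume (ball (0 : V) r) := by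
  have hfinrank : Module.finrank ℝ E = Module.finrank ℝ (WithLp 2 (ℝ × V)) := by
    rw [(WithLp.linearEquiv 2 ℝ (ℝ × V)).finrank_eq, Module.finrank_prod, Module.finrank_self,
      hEV, add_comm]
  let f : E ≃ₗᵢ[ℝ] WithLp 2 (ℝ × V) :=
    (stdOrthonormalBasis ℝ E).equiv (stdOrthonormalBasis ℝ _) (finCongr hfinrank)
  have hdist (L : ℝ) (hL : 0 ≤ L) : dist (0 : WithLp 2 (ℝ × V)) (toLp 2 (L, 0)) = L := by
    simp [hL]
  have hball : ball (0 : E) r = thickening r (segment ℝ 0 0) := by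
    rw [segment_same, thickening_singleton]
  rw [hball, volume_thickening_segment_congr f (hdist _ dist_nonneg).symm,
    volume_thickening_segment_congr f (w₁ := 0) (w₂ := toLp 2 (0, 0)) (by rw [hdist 0 le_rfl, dist_self]),
    volume_thickening_segment_toLp_prod dist_nonneg hr,
    volume_thickening_segment_toLp_prod le_rfl hr]
  simp

theorem EuclideanSpace.volume_ball_eq_unitBallVolume {k : ℕ} (x : EuclideanSpace ℝ (Fin k))
    {ρ : ℝ} (hρ : 0 < ρ) : volume (ball x ρ) = unitBallVolume k * ENNReal.ofReal (ρ ^ k) := by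
  rw [Measure.addHaar_ball_of_pos volume x hρ, finrank_euclideanSpace_fin, mul_comm]
  rfl

theorem stmt4 (n : ℕ) (v₁ v₂ : EuclideanSpace ℝ (Fin n)) (r : ℝ) (hr : 0 < r) :
    volume (Metric.thickening r (segment ℝ v₁ v₂))
      = unitBallVolume n * ENNReal.ofReal (r ^ n)
        + ENNReal.ofReal (dist v₁ v₂) * unitBallVolume (n - 1)
          * ENNReal.ofReal (r ^ (n - 1)) := by
  cases n with
  | zero =>
    rw [Subsingleton.elim v₂ v₁, segment_same, thickening_singleton, dist_self,
      EuclideanSpace.volume_ball_eq_unitBallVolume v₁ hr]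
    simp
  | succ m =>
    rw [volume_thickening_segment (V := EuclideanSpace ℝ (Fin m)) (by simp) v₁ v₂ hr,
      EuclideanSpace.volume_ball_eq_unitBallVolume 0 hr,
      EuclideanSpace.volume_ball_eq_unitBallVolume 0 hr, Nat.add_sub_cancel, mul_assoc]
end
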